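/- If A is an Order-Regular matrix with m rows, then à (obtained from A by negating any subset of its columns such that the first row of à equals the last row of A) is Order-Regular, and moreover the first row of A equals the last row of Ã. -/
import Mathlib


/-- Successor row index, saturating at the last row (convention `A[m+1] = A[m]`). -/
def rowSucc {m : ℕ} (i : Fin m) : Fin m :=
  if h : i.1 + 1 < m then ⟨i.1 + 1, h⟩ else i

/-- The matrix `A` satisfies the Order-Regularity constraint for the pair of rows `(i, j)`:
there is a column `k` with `A[i,k] ≠ A[i+1,k] = A[j,k] = A[j+1,k]`. -/
def SatCon {m n : ℕ} (A : Fin m → Fin n → Bool) (i j : Fin m) : Prop :=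
  ∃ k : Fin n, A i k ≠ A (rowSucc i) k ∧ A (rowSucc i) k = A j k ∧ A j k = A (rowSucc j) k

/-- Order-Regularity: every pair of rows `i < j` satisfies the constraint, and the last two
rows are distinct. -/
def OrderRegular {m n : ℕ} (A : Fin m → Fin n → Bool) : Prop :=
  (∀ i j : Fin m, i < j → SatCon A i j) ∧
  ∀ _h : 2 ≤ m, A ⟨m - 2, by omega⟩ ≠ A ⟨m - 1, by omega⟩

/-- `Ã`: obtained from `A` by negating exactly those columns `k` with `A[1,k] ≠ A[m,k]`,
so that the first row of `Ã` equals the last row of `A`. -/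
def tildeMat {m n : ℕ} (hm : 0 < m) (A : Fin m → Fin n → Bool) : Fin m → Fin n → Bool :=
  fun i k => if A ⟨0, hm⟩ k = A ⟨m - 1, by omega⟩ k then A i k else !(A i k)

theorem stmt5 {m n : ℕ} (hm : 0 < m) (A : Fin m → Fin n → Bool) (hA : OrderRegular A) :
    OrderRegular (tildeMat hm A) ∧
    ∀ k, A ⟨0, hm⟩ k = tildeMat hm A ⟨m - 1, by omega⟩ k := by
  refine ⟨⟨?_, ?_⟩, ?_⟩
  · intro i j hij
    obtain ⟨k, h1, h2, h3⟩ := hA.1 i j hij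
    refine ⟨k, ?_⟩
    unfold tildeMat
    by_cases hc : A ⟨0, hm⟩ k = A ⟨m - 1, by omega⟩ k <;> simp [hc, h2, h3, h1] <;>
      exact fun h => h1 (by cases A i k <;> cases A (rowSucc i) k <;> simp_all)
  · intro h2m hfeq
    obtain ⟨k, hk⟩ := Function.ne_iff.mp (hA.2 h2m)
    apply hk
    have := congrFun hfeq k
    unfold tildeMat at this
    by_cases hc : A ⟨0, hm⟩ k = A ⟨m - 1, by omega⟩ k <;> simp [hc] at this <;>
      [exact this; exact this]
  · intro k
    unfold tildeMat
    by_cases hc : A ⟨0, hm⟩ k = A ⟨m - 1, by omega⟩ k <;> simp [hc]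
    cases h0 : A ⟨0, hm⟩ k <;> cases h1 : A ⟨m - 1, by omega⟩ k <;> simp_all
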